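/- In the setting of mixed-logit demand with log-normal mixing, for k ≠ j there exists a constant C > 0 (depending on δ, M) such that along any ray p ∈ ℝ_{++}^J, |∂²_{p_j p_k} q_j(λ p)| ≤ C L''(c_{jk} λ p_j) for all λ > 0, where c_{jk} = (p_j + p_k)/p_j > 1 and L is the log-normal Laplace transform. -/

import Mathlib

open MeasureTheory Real Filter

/-- Density of the log-normal distribution with parameters `μ` and `σ` on `(0, ∞)`. -/
noncomputable def lognormalPdf (μ σ : ℝ) (α : ℝ) : ℝ :=
  (1 / (α * σ * Real.sqrt (2 * Real.pi))) * Real.exp (-(Real.log α - μ) ^ 2 / (2 * σ ^ 2))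

/-- Laplace transform of the log-normal distribution. -/
noncomputable def lnLaplace (μ σ : ℝ) (x : ℝ) : ℝ :=
  ∫ α in Set.Ioi (0 : ℝ), Real.exp (-α * x) * lognormalPdf μ σ α

/-- Logit choice probability of product `j` at prices `p`, mean utilities `δ`,
and price coefficient `α`. -/
noncomputable def logitShare {J : ℕ} (δ : Fin J → ℝ) (j : Fin J) (p : Fin J → ℝ) (α : ℝ) : ℝ :=
  Real.exp (δ j - α * p j) / (1 + ∑ l, Real.exp (δ l - α * p l))

/-- Mixed-logit demand for product `j` with log-normal mixing over the price coefficient. -/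
noncomputable def qLN {J : ℕ} (δ : Fin J → ℝ) (M μ σ : ℝ) (j : Fin J) (p : Fin J → ℝ) : ℝ :=
  M * ∫ α in Set.Ioi (0 : ℝ), logitShare δ j p α * lognormalPdf μ σ α

/-- Partial derivative of `F : (Fin J → ℝ) → ℝ` in the `k`-th coordinate at `p`. -/
noncomputable def pd {J : ℕ} (F : (Fin J → ℝ) → ℝ) (k : Fin J) (p : Fin J → ℝ) : ℝ :=
  deriv (fun t => F (Function.update p k t)) (p k)

/-!
Differentiating under the integral twice gives
`∂²q_j/∂p_j∂p_k = M ∫ α² s_j s_k (2 s_j - 1) f(α) dα` for the logit shares `s_i`.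
Since `|2 s_j - 1| ≤ 1` and `s_i ≤ exp (δ_i - α p_i)`, the integrand is dominated by
`exp (δ_j + δ_k) α² exp (-α (p_j + p_k)) f(α)`, whose integral is `exp (δ_j + δ_k) L''(p_j + p_k)`;
along the ray `λ p` this argument is `c_jk λ p_j`. Every differentiation under the integral is
justified by writing the integrand as a bounded continuous function of `α` times the integrable
density `f`, the bounds coming from `α ^ n exp (-α s) ≤ n! / s ^ n`.
-/

open Set
open scoped Nat

lemma pow_mul_exp_neg_mul_le {α s t : ℝ} (n : ℕ) (hα : 0 ≤ α) (hs : 0 < s) (hst : s ≤ t) :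
    α ^ n * exp (-α * t) ≤ n ! / s ^ n := by
  have h := pow_div_factorial_le_exp (s * α) (mul_nonneg hs.le hα) n
  rw [div_le_iff₀ (by positivity)] at h
  rw [le_div_iff₀ (by positivity), neg_mul, exp_neg, mul_assoc, mul_comm, mul_assoc,
    inv_mul_le_iff₀ (exp_pos _)]
  calc s ^ n * α ^ n ≤ exp (s * α) * n ! := by rw [← mul_pow]; exact h
    _ ≤ exp (α * t) * n ! :=
      mul_le_mul_of_nonneg_right (exp_le_exp.2 (by nlinarith)) (by positivity)

lemma half_le_of_mem_ball {x t : ℝ} (ht : t ∈ Metric.ball x (x / 2)) : x / 2 ≤ t := by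
  rw [Real.ball_eq_Ioo] at ht
  linarith [ht.1]

section Lognormal

variable {μ σ : ℝ}

lemma lognormalPdf_nonneg (hσ : 0 < σ) {α : ℝ} (hα : 0 < α) : 0 ≤ lognormalPdf μ σ α := by
  unfold lognormalPdf
  positivity

lemma continuousOn_lognormalPdf (hσ : 0 < σ) : ContinuousOn (lognormalPdf μ σ) (Ioi 0) := by
  unfold lognormalPdf
  refine ContinuousOn.mul ?_ (continuous_exp.comp_continuousOn ?_)
  · exact continuousOn_const.div (by fun_prop) fun α (hα : 0 < α) => by positivity
  · exact ((continuousOn_log.mono fun α (hα : 0 < α) => hα.ne').sub continuousOn_const).pow 2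
      |>.neg.div_const _

/-- Completing the square in `log α`: `α ^ m` times the density is the exponential of a concave
quadratic in `log α`, maximal at `log α = μ + (m - 1) σ²`. -/
lemma pow_mul_lognormalPdf_le (hσ : 0 < σ) (m : ℕ) {α : ℝ} (hα : 0 < α) :
    α ^ m * lognormalPdf μ σ α ≤
      exp ((m - 1) * μ + (m - 1) ^ 2 * σ ^ 2 / 2) / (σ * √(2 * π)) := by
  obtain ⟨u, hu⟩ : ∃ u, u = log α := ⟨_, rfl⟩
  have hpow : α ^ m / α = exp ((m - 1) * u) := by
    rw [hu, sub_one_mul, exp_sub, exp_log hα, mul_comm, exp_mul, exp_log hα, rpow_natCast]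
  have hsq : (m - 1) * u - (u - μ) ^ 2 / (2 * σ ^ 2) ≤ (m - 1) * μ + (m - 1) ^ 2 * σ ^ 2 / 2 := by
    rw [sub_le_iff_le_add, ← sub_le_iff_le_add', le_div_iff₀ (by positivity)]
    nlinarith [sq_nonneg (u - μ - (m - 1) * σ ^ 2)]
  calc α ^ m * lognormalPdf μ σ α
      = exp ((m - 1) * u - (u - μ) ^ 2 / (2 * σ ^ 2)) / (σ * √(2 * π)) := by
        rw [lognormalPdf, exp_sub, ← hpow, neg_div, exp_neg, hu]
        field_simp
    _ ≤ _ := by gcongr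

lemma integrableOn_lognormalPdf (hσ : 0 < σ) : IntegrableOn (lognormalPdf μ σ) (Ioi 0) := by
  obtain ⟨A, hA⟩ : ∃ A, ∀ α > 0, lognormalPdf μ σ α ≤ A :=
    ⟨_, fun α hα => by simpa using pow_mul_lognormalPdf_le (μ := μ) hσ 0 hα⟩
  obtain ⟨B, hB⟩ : ∃ B, ∀ α > 0, α ^ 2 * lognormalPdf μ σ α ≤ B :=
    ⟨_, fun α hα => pow_mul_lognormalPdf_le hσ 2 hα⟩
  refine ((integrable_inv_one_add_sq.const_mul (A + B)).integrableOn).mono'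
    ((continuousOn_lognormalPdf hσ).aestronglyMeasurable measurableSet_Ioi) ?_
  filter_upwards [ae_restrict_mem measurableSet_Ioi] with α (hα : 0 < α)
  have h0 := hA α hα
  have h2 := hB α hα
  rw [norm_of_nonneg (lognormalPdf_nonneg hσ hα), ← div_eq_mul_inv, le_div_iff₀ (by positivity)]
  linarith

lemma aestronglyMeasurable_mul_lognormalPdf (hσ : 0 < σ) {G : ℝ → ℝ} (hG : Continuous G) :
    AEStronglyMeasurable (fun α => G α * lognormalPdf μ σ α) (volume.restrict (Ioi 0)) :=
  (hG.continuousOn.mul (continuousOn_lognormalPdf hσ)).aestronglyMeasurable measurableSet_Ioi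

lemma integrableOn_mul_lognormalPdf (hσ : 0 < σ) {G : ℝ → ℝ} {c : ℝ} (hG : Continuous G)
    (hc : ∀ α > 0, |G α| ≤ c) :
    IntegrableOn (fun α => G α * lognormalPdf μ σ α) (Ioi 0) :=
  (integrableOn_lognormalPdf hσ).bdd_mul hG.aestronglyMeasurable <| by
    filter_upwards [ae_restrict_mem measurableSet_Ioi] with α hα using hc α hα

lemma hasDerivAt_integral_mul_lognormalPdf (hσ : 0 < σ) {G G' : ℝ → ℝ → ℝ} {x₀ ε c c' : ℝ}
    (hε : 0 < ε) (hG : ∀ t, Continuous (G t)) (hG' : Continuous (G' x₀))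
    (hc : ∀ α > 0, |G x₀ α| ≤ c) (hc' : ∀ t ∈ Metric.ball x₀ ε, ∀ α > 0, |G' t α| ≤ c')
    (hderiv : ∀ t ∈ Metric.ball x₀ ε, ∀ α > 0, HasDerivAt (G · α) (G' t α) t) :
    HasDerivAt (fun t => ∫ α in Ioi 0, G t α * lognormalPdf μ σ α)
      (∫ α in Ioi 0, G' x₀ α * lognormalPdf μ σ α) x₀ := by
  refine (hasDerivAt_integral_of_dominated_loc_of_deriv_le (μ := volume.restrict (Ioi 0))
    (F := fun t α => G t α * lognormalPdf μ σ α) (F' := fun t α => G' t α * lognormalPdf μ σ α)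
    (bound := fun α => c' * lognormalPdf μ σ α)
    (Metric.ball_mem_nhds x₀ hε) ?_ (integrableOn_mul_lognormalPdf hσ (hG x₀) hc)
    (aestronglyMeasurable_mul_lognormalPdf hσ hG') ?_
    ((integrableOn_lognormalPdf hσ).const_mul c') ?_).2
  · exact .of_forall fun t => aestronglyMeasurable_mul_lognormalPdf hσ (hG t)
  · filter_upwards [ae_restrict_mem measurableSet_Ioi] with α (hα : 0 < α) t ht
    rw [norm_mul, norm_of_nonneg (lognormalPdf_nonneg hσ hα)]
    exact mul_le_mul_of_nonneg_right (hc' t ht α hα) (lognormalPdf_nonneg hσ hα)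
  · filter_upwards [ae_restrict_mem measurableSet_Ioi] with α (hα : 0 < α) t ht
    exact (hderiv t ht α hα).mul_const _

end Lognormal

section Laplace
variable {μ σ : ℝ}

lemma hasDerivAt_lnLaplace (hσ : 0 < σ) {x : ℝ} (hx : 0 < x) :
    HasDerivAt (lnLaplace μ σ) (∫ α in Ioi 0, -α * exp (-α * x) * lognormalPdf μ σ α) x := by
  refine hasDerivAt_integral_mul_lognormalPdf (G := fun t α => exp (-α * t))
    (G' := fun t α => -α * exp (-α * t)) (c := 1) (c' := 1 ! / (x / 2) ^ 1) hσ (half_pos hx)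
    (fun t => by fun_prop) (by fun_prop) (fun α hα => ?_) (fun t ht α hα => ?_) (fun t _ α _ => ?_)
  · rw [abs_of_pos (exp_pos _), exp_le_one_iff]
    nlinarith
  · rw [abs_mul, abs_neg, abs_of_pos hα, abs_of_pos (exp_pos _)]
    simpa using pow_mul_exp_neg_mul_le 1 hα.le (half_pos hx) (half_le_of_mem_ball ht)
  · exact (((hasDerivAt_id' t).const_mul (-α)).exp).congr_deriv (by ring)

lemma deriv_deriv_lnLaplace (hσ : 0 < σ) {x : ℝ} (hx : 0 < x) :
    deriv (deriv (lnLaplace μ σ)) x = ∫ α in Ioi 0, α ^ 2 * exp (-α * x) * lognormalPdf μ σ α := by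
  have hderiv : deriv (lnLaplace μ σ) =ᶠ[nhds x]
      fun y => ∫ α in Ioi 0, -α * exp (-α * y) * lognormalPdf μ σ α := by
    filter_upwards [Ioi_mem_nhds hx] with y hy using (hasDerivAt_lnLaplace hσ hy).deriv
  rw [hderiv.deriv_eq]
  refine (hasDerivAt_integral_mul_lognormalPdf (G := fun t α => -α * exp (-α * t))
    (G' := fun t α => α ^ 2 * exp (-α * t)) (c := 1 ! / x ^ 1)
    (c' := 2 ! / (x / 2) ^ 2) hσ (half_pos hx) (fun t => by fun_prop)
    (by fun_prop) (fun α hα => ?_) (fun t ht α hα => ?_) (fun t _ α _ => ?_)).deriv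
  · rw [abs_mul, abs_neg, abs_of_pos hα, abs_of_pos (exp_pos _)]
    simpa using pow_mul_exp_neg_mul_le 1 hα.le hx le_rfl
  · rw [abs_of_nonneg (by positivity)]
    exact pow_mul_exp_neg_mul_le 2 hα.le (half_pos hx) (half_le_of_mem_ball ht)
  · exact ((((hasDerivAt_id' t).const_mul (-α)).exp).const_mul (-α)).congr_deriv (by ring)

end Laplace

section Logit
variable {J : ℕ} (δ : Fin J → ℝ) (j : Fin J) (p : Fin J → ℝ) (α : ℝ)

lemma one_le_logitDenominator : 1 ≤ 1 + ∑ l, exp (δ l - α * p l) :=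
  le_add_of_nonneg_right (Finset.sum_nonneg fun _ _ => (exp_pos _).le)

lemma logitShare_nonneg : 0 ≤ logitShare δ j p α :=
  div_nonneg (exp_pos _).le (zero_le_one.trans (one_le_logitDenominator δ p α))

lemma logitShare_le_exp : logitShare δ j p α ≤ exp (δ j - α * p j) :=
  div_le_self (exp_pos _).le (one_le_logitDenominator δ p α)

lemma logitShare_le_one : logitShare δ j p α ≤ 1 := by
  refine div_le_one_of_le₀ ?_ (zero_le_one.trans (one_le_logitDenominator δ p α))
  exact le_add_of_nonneg_of_le zero_le_one
    (Finset.single_le_sum (f := fun l => exp (δ l - α * p l)) (fun _ _ => (exp_pos _).le)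
      (Finset.mem_univ j))

@[fun_prop]
lemma continuous_logitShare : Continuous (logitShare δ j p) := by
  unfold logitShare
  exact Continuous.div (by fun_prop) (by fun_prop)
    fun α => (zero_lt_one.trans_le (one_le_logitDenominator δ p α)).ne'

lemma hasDerivAt_logitShare_update (k : Fin J) (t : ℝ) :
    HasDerivAt (fun t => logitShare δ j (Function.update p k t) α)
      (α * logitShare δ j (Function.update p k t) α *
        (logitShare δ k (Function.update p k t) α - if j = k then 1 else 0)) t := by
  set q := Function.update p k t with hq
  have hterm (l : Fin J) : HasDerivAt (fun t => exp (δ l - α * Function.update p k t l))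
      (exp (δ l - α * q l) * -(α * if l = k then 1 else 0)) t := by
    have h := (hasDerivAt_pi.1 (hasDerivAt_update p k t)) l
    rw [Pi.single_apply] at h
    exact ((h.const_mul α).const_sub (δ l)).exp
  have hsum := (HasDerivAt.fun_sum (u := Finset.univ) fun l _ => hterm l).const_add 1
  simp only [mul_neg, mul_ite, mul_one, mul_zero, Finset.sum_neg_distrib, Finset.sum_ite_eq',
    Finset.mem_univ, if_true] at hsum
  have hD := zero_lt_one.trans_le (one_le_logitDenominator δ q α)
  refine ((hterm j).div hsum hD.ne').congr_deriv ?_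
  simp only [← hq, logitShare]
  split_ifs <;> field_simp <;> ring

end Logit

lemma pow_mul_logitShare_le {J : ℕ} (δ : Fin J → ℝ) (k : Fin J) (p : Fin J → ℝ) {α s : ℝ}
    (n : ℕ) (hα : 0 ≤ α) (hs : 0 < s) (hsp : s ≤ p k) :
    α ^ n * logitShare δ k p α ≤ exp (δ k) * (n ! / s ^ n) :=
  calc α ^ n * logitShare δ k p α ≤ α ^ n * exp (δ k - α * p k) :=
        mul_le_mul_of_nonneg_left (logitShare_le_exp δ k p α) (by positivity)
    _ = exp (δ k) * (α ^ n * exp (-α * p k)) := by rw [sub_eq_add_neg, exp_add]; ring_nf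
    _ ≤ exp (δ k) * (n ! / s ^ n) :=
        mul_le_mul_of_nonneg_left (pow_mul_exp_neg_mul_le n hα hs hsp) (exp_pos _).le

section Demand
variable {J : ℕ} {μ σ : ℝ} (δ : Fin J → ℝ) (M : ℝ) {j k : Fin J}

lemma abs_pow_mul_logitShare_mul_logitShare_le (p : Fin J → ℝ) {α s : ℝ} (n : ℕ) (hα : 0 ≤ α)
    (hs : 0 < s) (hsp : s ≤ p k) :
    |α ^ n * logitShare δ j p α * logitShare δ k p α| ≤ exp (δ k) * (n ! / s ^ n) := by
  have hj := logitShare_nonneg δ j p α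
  have hk := logitShare_nonneg δ k p α
  rw [abs_of_nonneg (by positivity), mul_right_comm]
  exact (mul_le_of_le_one_right (by positivity) (logitShare_le_one δ j p α)).trans
    (pow_mul_logitShare_le δ k p n hα hs hsp)

lemma pd_qLN_of_ne (hσ : 0 < σ) (hkj : k ≠ j) {q : Fin J → ℝ} (hq : 0 < q k) :
    pd (qLN δ M μ σ j) k q =
      M * ∫ α in Ioi 0, α * logitShare δ j q α * logitShare δ k q α * lognormalPdf μ σ α := by
  have h := hasDerivAt_integral_mul_lognormalPdf (μ := μ)
    (G := fun t α => logitShare δ j (Function.update q k t) α)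
    (G' := fun t α => α ^ 1 * logitShare δ j (Function.update q k t) α *
      logitShare δ k (Function.update q k t) α)
    (x₀ := q k) hσ (half_pos hq) (fun t => continuous_logitShare δ j _) (by fun_prop) (c := 1)
    (fun α _ => by
      rw [abs_of_nonneg (logitShare_nonneg ..)]
      exact logitShare_le_one ..)
    (fun t ht α hα => abs_pow_mul_logitShare_mul_logitShare_le δ _ 1 hα.le (half_pos hq)
      (by simpa using half_le_of_mem_ball ht))
    (fun t _ α _ => by
      simpa [if_neg hkj.symm] using hasDerivAt_logitShare_update δ j q α k t)
  simpa [pd, qLN] using (h.const_mul M).deriv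

lemma pd_pd_qLN_of_ne (hσ : 0 < σ) (hkj : k ≠ j) {q : Fin J → ℝ} (hq : 0 < q k) :
    pd (pd (qLN δ M μ σ j) k) j q =
      M * ∫ α in Ioi 0, α ^ 2 * logitShare δ j q α * logitShare δ k q α *
        (2 * logitShare δ j q α - 1) * lognormalPdf μ σ α := by
  have hpd : (fun t => pd (qLN δ M μ σ j) k (Function.update q j t)) = fun t =>
      M * ∫ α in Ioi 0, α ^ 1 * logitShare δ j (Function.update q j t) α *
        logitShare δ k (Function.update q j t) α * lognormalPdf μ σ α := by
    funext t
    rw [pd_qLN_of_ne δ M hσ hkj (by rwa [Function.update_of_ne hkj])]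
    simp only [pow_one]
  have h := hasDerivAt_integral_mul_lognormalPdf (μ := μ) (x₀ := q j)
    (G := fun t α => α ^ 1 * logitShare δ j (Function.update q j t) α *
      logitShare δ k (Function.update q j t) α)
    (G' := fun t α => α ^ 2 * logitShare δ j (Function.update q j t) α *
      logitShare δ k (Function.update q j t) α * (2 * logitShare δ j (Function.update q j t) α - 1))
    (c' := exp (δ k) * (2 ! / q k ^ 2)) hσ one_pos (fun t => by fun_prop) (by fun_prop)
    (fun α hα => abs_pow_mul_logitShare_mul_logitShare_le δ _ 1 hα.le hq (by simp [hkj]))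
    (fun t _ α hα => ?_) (fun t _ α _ => ?_)
  · change deriv (fun t => pd (qLN δ M μ σ j) k (Function.update q j t)) (q j) = _
    rw [hpd, (h.const_mul M).deriv, Function.update_eq_self]
  · have hj := logitShare_nonneg δ j (Function.update q j t) α
    have hj1 := logitShare_le_one δ j (Function.update q j t) α
    rw [abs_mul]
    refine (mul_le_of_le_one_right (abs_nonneg _) (abs_le.2 ⟨by linarith, by linarith⟩)).trans ?_
    exact abs_pow_mul_logitShare_mul_logitShare_le δ _ 2 hα.le hq (by simp [hkj])
  · have hj := hasDerivAt_logitShare_update δ j q α j t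
    have hk := hasDerivAt_logitShare_update δ k q α j t
    simp only [if_pos, if_neg hkj] at hj hk
    exact ((hj.const_mul (α ^ 1)).mul hk).congr_deriv (by ring)

lemma abs_pd_pd_qLN_le (hσ : 0 < σ) (hkj : k ≠ j) {q : Fin J → ℝ} (hk : 0 < q k)
    (hjk : 0 < q j + q k) :
    |pd (pd (qLN δ M μ σ j) k) j q| ≤
      |M| * exp (δ j + δ k) * deriv (deriv (lnLaplace μ σ)) (q j + q k) := by
  have hbound : ∀ α > 0, |α ^ 2 * logitShare δ j q α * logitShare δ k q α *
      (2 * logitShare δ j q α - 1)| ≤ exp (δ j + δ k) * α ^ 2 * exp (-α * (q j + q k)) := by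
    intro α hα
    have hj := logitShare_nonneg δ j q α
    have hj1 := logitShare_le_one δ j q α
    have hk := logitShare_nonneg δ k q α
    calc _ ≤ α ^ 2 * logitShare δ j q α * logitShare δ k q α := by
          rw [abs_mul, abs_of_nonneg (by positivity)]
          exact mul_le_of_le_one_right (by positivity) (abs_le.2 ⟨by linarith, by linarith⟩)
      _ ≤ α ^ 2 * exp (δ j - α * q j) * exp (δ k - α * q k) := by
          gcongr
          exacts [logitShare_le_exp .., logitShare_le_exp ..]
      _ = _ := by
          rw [mul_assoc, ← exp_add, show δ j - α * q j + (δ k - α * q k) =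
            δ j + δ k + -α * (q j + q k) by ring, exp_add]
          ring
  have hint := integrableOn_mul_lognormalPdf (μ := μ) hσ
    (G := fun α => exp (δ j + δ k) * α ^ 2 * exp (-α * (q j + q k)))
    (c := exp (δ j + δ k) * (2 ! / (q j + q k) ^ 2)) (by fun_prop) fun α hα => by
      rw [abs_of_nonneg (by positivity), mul_assoc]
      exact mul_le_mul_of_nonneg_left (pow_mul_exp_neg_mul_le 2 hα.le hjk le_rfl)
        (exp_pos (δ j + δ k)).le
  rw [pd_pd_qLN_of_ne δ M hσ hkj hk, deriv_deriv_lnLaplace hσ hjk, abs_mul, mul_assoc,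
    ← integral_const_mul]
  refine mul_le_mul_of_nonneg_left ?_ (abs_nonneg M)
  calc _ ≤ ∫ α in Ioi 0, exp (δ j + δ k) * α ^ 2 * exp (-α * (q j + q k)) * lognormalPdf μ σ α := by
        refine (norm_eq_abs _).symm.trans_le (norm_integral_le_of_norm_le hint ?_)
        filter_upwards [ae_restrict_mem measurableSet_Ioi] with α (hα : 0 < α)
        rw [norm_mul, norm_of_nonneg (lognormalPdf_nonneg hσ hα)]
        exact mul_le_mul_of_nonneg_right (hbound α hα) (lognormalPdf_nonneg hσ hα)
    _ = _ := by simp only [mul_assoc]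

end Demand

theorem qLN_mixed_second_deriv_bound_general {J : ℕ} (M : ℝ) (hM : 0 < M)
    (δ : Fin J → ℝ) (μ σ : ℝ) (hσ : 0 < σ) (j k : Fin J) (hkj : k ≠ j) :
    ∃ C > (0 : ℝ), ∀ p : Fin J → ℝ, (∀ i, 0 < p i) →
      (1 < (p j + p k) / p j) ∧
      ∀ l > (0 : ℝ),
        |pd (pd (qLN δ M μ σ j) k) j (l • p)|
          ≤ C * deriv (deriv (lnLaplace μ σ)) ((p j + p k) / p j * (l * p j)) := by
  refine ⟨M * exp (δ j + δ k), by positivity, fun p hp => ⟨?_, fun l hl => ?_⟩⟩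
  · rw [one_lt_div (hp j)]
    linarith [hp k]
  · have hray : (p j + p k) / p j * (l * p j) = (l • p) j + (l • p) k := by
      simp only [Pi.smul_apply, smul_eq_mul]
      field_simp [(hp j).ne']
    have hk : 0 < (l • p) k := mul_pos hl (hp k)
    rw [hray]
    exact (abs_pd_pd_qLN_le δ M hσ hkj hk (add_pos (mul_pos hl (hp j)) hk)).trans_eq
      (by rw [abs_of_pos hM])

/-- For `k ≠ j` there is `C > 0` (depending on `δ, M`) such that along any ray
`p ∈ ℝ_{++}^J`, `|∂²_{p_j p_k} q_j(λp)| ≤ C L''(c_{jk} λ p_j)` for all `λ > 0`,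
where `c_{jk} = (p_j + p_k)/p_j > 1`. -/
theorem qLN_mixed_second_deriv_bound {J : ℕ} (hJ : 1 ≤ J) (M : ℝ) (hM : 0 < M)
    (δ : Fin J → ℝ) (μ σ : ℝ) (hσ : 0 < σ) (j k : Fin J) (hkj : k ≠ j) :
    ∃ C > (0 : ℝ), ∀ p : Fin J → ℝ, (∀ i, 0 < p i) →
      (1 < (p j + p k) / p j) ∧
      ∀ l > (0 : ℝ),
        |pd (pd (qLN δ M μ σ j) k) j (l • p)|
          ≤ C * deriv (deriv (lnLaplace μ σ)) ((p j + p k) / p j * (l * p j)) :=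
  qLN_mixed_second_deriv_bound_general M hM δ μ σ hσ j k hkj
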